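/- arXiv:2403.18041 — 4 statements merged into one kernel-verified Lean document; each statement's English description precedes it below -/
import Mathlib

section
/- Let Σ be a real symmetric positive-definite (m+1)×(m+1) matrix, β > 0, and φ ∈ ℝ^{1×(m+1)} a row vector. If there exists u ∈ ℝᵐ such that (1, u)ᵀ (β² Σ − φᵀ φ) (1, u) ≤ 0, then 1 − (1/β²) φ Σ⁻¹ φᵀ ≤ 0. -/
/-!
If `v = (1, u)` satisfies `β² vᵀΣv ≤ (φ ⬝ v)²`, then Cauchy–Schwarz for the inner product
`⟨x, y⟩ = xᵀΣy`, applied to `v` and `Σ⁻¹φ`, gives `(φ ⬝ v)² ≤ (φΣ⁻¹φᵀ) vᵀΣv`. Dividing by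
`vᵀΣv > 0` yields `β² ≤ φΣ⁻¹φᵀ`.
-/

open Matrix

namespace Matrix

variable {n : Type*} [Fintype n]

theorem dotProduct_vecMulVec_mulVec_self (φ v : n → ℝ) :
    v ⬝ᵥ vecMulVec φ φ *ᵥ v = (φ ⬝ᵥ v) ^ 2 := by
  rw [vecMulVec_mulVec, op_smul_eq_smul, dotProduct_smul, smul_eq_mul, dotProduct_comm v φ, sq]

theorem PosSemidef.sq_dotProduct_mulVec_le {A : Matrix n n ℝ} (hA : A.PosSemidef) (x y : n → ℝ) :
    (x ⬝ᵥ A *ᵥ y) ^ 2 ≤ (x ⬝ᵥ A *ᵥ x) * (y ⬝ᵥ A *ᵥ y) := by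
  have hsymm : y ⬝ᵥ A *ᵥ x = x ⬝ᵥ A *ᵥ y := by
    rw [dotProduct_mulVec, ← mulVec_transpose, ← conjTranspose_eq_transpose_of_trivial,
      hA.isHermitian.eq, dotProduct_comm]
  have hquad : ∀ t : ℝ, 0 ≤ (y ⬝ᵥ A *ᵥ y) * (t * t) + 2 * (x ⬝ᵥ A *ᵥ y) * t + x ⬝ᵥ A *ᵥ x := by
    intro t
    have := hA.dotProduct_mulVec_nonneg (x + t • y)
    simp only [star_trivial, mulVec_add, mulVec_smul, dotProduct_add, add_dotProduct,
      dotProduct_smul, smul_dotProduct, smul_eq_mul, hsymm] at this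
    linarith
  have := discrim_le_zero hquad
  rw [discrim] at this
  linarith

theorem PosDef.sq_dotProduct_le_inv_mul [DecidableEq n] {S : Matrix n n ℝ} (hS : S.PosDef)
    (φ v : n → ℝ) : (φ ⬝ᵥ v) ^ 2 ≤ (φ ⬝ᵥ S⁻¹ *ᵥ φ) * (v ⬝ᵥ S *ᵥ v) := by
  have hSw : S *ᵥ (S⁻¹ *ᵥ φ) = φ := by
    rw [mulVec_mulVec, mul_nonsing_inv _ (isUnit_iff_isUnit_det S |>.mp hS.isUnit), one_mulVec]
  have := hS.posSemidef.sq_dotProduct_mulVec_le v (S⁻¹ *ᵥ φ)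
  rwa [hSw, dotProduct_comm v φ, dotProduct_comm (S⁻¹ *ᵥ φ) φ, mul_comm] at this

theorem PosDef.le_dotProduct_inv_mulVec_of_dotProduct_mulVec_nonpos [DecidableEq n]
    {S : Matrix n n ℝ} (hS : S.PosDef) (c : ℝ) (φ : n → ℝ) {v : n → ℝ} (hv : v ≠ 0)
    (h : v ⬝ᵥ (c • S - vecMulVec φ φ) *ᵥ v ≤ 0) : c ≤ φ ⬝ᵥ S⁻¹ *ᵥ φ := by
  rw [sub_mulVec, dotProduct_sub, smul_mulVec, dotProduct_smul, smul_eq_mul,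
    dotProduct_vecMulVec_mulVec_self] at h
  have hpos : 0 < v ⬝ᵥ S *ᵥ v := by simpa using hS.dotProduct_mulVec_pos hv
  nlinarith [hS.sq_dotProduct_le_inv_mul φ v]

end Matrix

/-- Necessary feasibility condition (Corollary 2 of the paper): if `Σ` is symmetric
positive definite, `β > 0`, and some `u` satisfies `(1,u)ᵀ (β² Σ − φᵀφ) (1,u) ≤ 0`,
then `1 − (1/β²) φ Σ⁻¹ φᵀ ≤ 0`. -/
theorem necessary_feasibility (m : ℕ)
    (Sig : Matrix (Fin (m + 1)) (Fin (m + 1)) ℝ) (hSig : Sig.PosDef)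
    (β : ℝ) (hβ : 0 < β) (φ : Fin (m + 1) → ℝ)
    (h : ∃ u : Fin m → ℝ,
      (Fin.cons 1 u) ⬝ᵥ (β ^ 2 • Sig - Matrix.vecMulVec φ φ) *ᵥ (Fin.cons 1 u) ≤ 0) :
    1 - (1 / β ^ 2) * (φ ⬝ᵥ Sig⁻¹ *ᵥ φ) ≤ 0 := by
  obtain ⟨u, hu⟩ := h
  have hv : (Fin.cons 1 u : Fin (m + 1) → ℝ) ≠ 0 := fun h0 => by
    simpa using congr_fun h0 0
  have hle := hSig.le_dotProduct_inv_mulVec_of_dotProduct_mulVec_nonpos _ φ hv hu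
  rw [sub_nonpos, one_div_mul_eq_div, le_div_iff₀ (by positivity), one_mul]
  exact hle
end

section
/- Let m ≥ 1, let A be a real (m+1)×m matrix, and let c ∈ ℝ^{1×m} be a row vector such that the symmetric matrix AᵀA − cᵀc is negative definite. Then for every b ∈ ℝ^{m+1} and every d ∈ ℝ, there exists u ∈ ℝᵐ satisfying ‖A u + b‖₂ ≤ c u + d. -/
open Matrix

lemma euclid_norm_sq (n : ℕ) (v : Fin n → ℝ) :
    ‖(WithLp.equiv 2 (Fin n → ℝ)).symm v‖ ^ 2 = v ⬝ᵥ v := by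
  rw [EuclideanSpace.norm_eq, Real.sq_sqrt (by positivity)]
  simp [dotProduct, sq]

lemma quad_form_eq (n m : ℕ) (A : Matrix (Fin n) (Fin m) ℝ) (x : Fin m → ℝ) (c : Fin m → ℝ) :
    x ⬝ᵥ (Aᵀ * A - Matrix.vecMulVec c c) *ᵥ x = (A *ᵥ x) ⬝ᵥ (A *ᵥ x) - (c ⬝ᵥ x)^2 := by
  rw [sub_mulVec, dotProduct_sub, ← mulVec_mulVec, dotProduct_mulVec, vecMul_transpose]
  congr 1
  simp [vecMulVec, mulVec, dotProduct, Finset.mul_sum, Finset.sum_mul, sq, mul_comm,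
    mul_left_comm]

/-- Sufficient feasibility condition (Corollary 3 of the paper): if the symmetric matrix
`S³ = AᵀA − cᵀc` is negative definite (its quadratic form is strictly negative on all
nonzero vectors), then for every `b` and `d` there exists `u` with `‖A u + b‖₂ ≤ c u + d`. -/
theorem sufficient_feasibility (m : ℕ) (hm : 1 ≤ m)
    (A : Matrix (Fin (m + 1)) (Fin m) ℝ) (c : Fin m → ℝ)
    (hND : ∀ x : Fin m → ℝ, x ≠ 0 →
      x ⬝ᵥ (Aᵀ * A - Matrix.vecMulVec c c) *ᵥ x < 0) :
    ∀ (b : Fin (m + 1) → ℝ) (d : ℝ), ∃ u : Fin m → ℝ,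
      ‖(WithLp.equiv 2 (Fin (m + 1) → ℝ)).symm (A *ᵥ u + b)‖ ≤ c ⬝ᵥ u + d := by
  intro b d
  haveI : NeZero m := ⟨by omega⟩
  -- choose a nonzero vector `v`
  set v₀ : Fin m → ℝ := Pi.single 0 1 with hv₀
  have hv₀ne : v₀ ≠ 0 := by
    intro h
    have := congrFun h 0
    simp [hv₀] at this
  -- strictness at v₀ gives (c ⬝ᵥ v₀) ≠ 0
  have key : ∀ x : Fin m → ℝ, x ≠ 0 → (A *ᵥ x) ⬝ᵥ (A *ᵥ x) < (c ⬝ᵥ x)^2 := by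
    intro x hx
    have := hND x hx
    rw [quad_form_eq] at this
    linarith
  have hcv : c ⬝ᵥ v₀ ≠ 0 := by
    intro h
    have := key v₀ hv₀ne
    have hnn : (0:ℝ) ≤ (A *ᵥ v₀) ⬝ᵥ (A *ᵥ v₀) :=  by
      rw [← euclid_norm_sq]; positivity
    rw [h] at this; simp at this; linarith
  -- let w be ±v₀ with c ⬝ᵥ w > 0
  obtain ⟨w, hwne, hcw⟩ : ∃ w : Fin m → ℝ, w ≠ 0 ∧ 0 < c ⬝ᵥ w := by
    rcases hcv.lt_or_gt with h | h
    · exact ⟨-v₀, neg_ne_zero.mpr hv₀ne, by simpa using h⟩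
    · exact ⟨v₀, hv₀ne, h⟩
  -- ‖A w‖ < c ⬝ᵥ w
  set nAw : ℝ := ‖(WithLp.equiv 2 (Fin (m+1) → ℝ)).symm (A *ᵥ w)‖ with hnAw
  have hnAwsq : nAw ^ 2 = (A *ᵥ w) ⬝ᵥ (A *ᵥ w) := euclid_norm_sq _ _
  have hnAwnn : 0 ≤ nAw := norm_nonneg _
  have hlt : nAw < c ⬝ᵥ w := by
    have h1 := key w hwne
    nlinarith [h1, hnAwsq, hnAwnn, hcw]
  set δ : ℝ := c ⬝ᵥ w - nAw with hδ
  have hδpos : 0 < δ := by linarith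
  set nb : ℝ := ‖(WithLp.equiv 2 (Fin (m+1) → ℝ)).symm b‖ with hnb
  set t : ℝ := max 0 ((nb - d) / δ) with ht
  have htnn : 0 ≤ t := le_max_left _ _
  have htδ : nb - d ≤ t * δ := by
    have : (nb - d) / δ ≤ t := le_max_right _ _
    calc nb - d = (nb - d) / δ * δ := by field_simp
    _ ≤ t * δ := by nlinarith
  refine ⟨t • w, ?_⟩
  have hAu : A *ᵥ (t • w) = t • (A *ᵥ w) := by
    rw [mulVec_smul]
  have hnorm : ‖(WithLp.equiv 2 (Fin (m+1) → ℝ)).symm (A *ᵥ (t • w) + b)‖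
      ≤ t * nAw + nb := by
    rw [hAu]
    have h1 : (WithLp.equiv 2 (Fin (m+1) → ℝ)).symm (t • (A *ᵥ w) + b)
        = t • (WithLp.equiv 2 (Fin (m+1) → ℝ)).symm (A *ᵥ w)
          + (WithLp.equiv 2 (Fin (m+1) → ℝ)).symm b := by
      rfl
    rw [h1]
    calc ‖_ + _‖ ≤ ‖t • (WithLp.equiv 2 (Fin (m+1) → ℝ)).symm (A *ᵥ w)‖ + nb :=
          norm_add_le _ _
      _ ≤ t * nAw + nb := by
          rw [norm_smul, Real.norm_eq_abs, abs_of_nonneg htnn]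
  have hcu : c ⬝ᵥ (t • w) = t * (c ⬝ᵥ w) := by
    simp only [dotProduct, Pi.smul_apply, smul_eq_mul]
    rw [Finset.mul_sum]
    exact Finset.sum_congr rfl fun i _ => by ring
  rw [hcu]
  have : t * nAw + nb ≤ t * (c ⬝ᵥ w) + d := by nlinarith
  linarith
end

section
/- Let 𝒳 be a set, m ≥ 0, and for i ∈ {1, …, m+1} let kⁱ : 𝒳 × 𝒳 → ℝ be positive-definite kernels (all Gram matrices symmetric positive semidefinite); set Λ(x, x') = diag(k¹(x,x'), …, k^{m+1}(x,x')). Let (x₁, y₁), …, (x_N, y_N) ∈ 𝒳 × ℝ^{m+1}, let K be the N×N matrix with K_{ab} = y_aᵀ Λ(x_a, x_b) y_b, let x* ∈ 𝒳, let K̄ ∈ ℝ^{(m+1)×N} be the matrix whose b-th column is Λ(x*, x_b) y_b, and let σ > 0. Then the matrix Σ(x*) = Λ(x*, x*) − K̄ (K + σ² I)⁻¹ K̄ᵀ is symmetric positive semidefinite. -/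
/-!
The posterior covariance is a Schur complement. After adjoining the points `(x*, eᵢ)` to the
data, the block matrix `[Λ(x*, x*), K̄; K̄ᵀ, K]` is a Gram matrix of the structured kernel
`((x, y), (x', y')) ↦ yᵀ Λ(x, x') y'`, hence positive semidefinite. Adding `σ² I` to its lower
right block keeps it positive semidefinite and makes that block positive definite, and the Schur
complement of a positive definite block in a positive semidefinite block matrix is positive
semidefinite.
-/

open Matrix

def IsPosDefKernel {X : Type*} (κ : X → X → ℝ) : Prop :=
  ∀ (M : ℕ) (z : Fin M → X), (Matrix.of fun a b => κ (z a) (z b)).PosSemidef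

namespace IsPosDefKernel

variable {X : Type*} {κ : X → X → ℝ}

theorem posSemidef_gram (hκ : IsPosDefKernel κ) {ι : Type*} [Fintype ι] (z : ι → X) :
    (Matrix.of fun a b => κ (z a) (z b)).PosSemidef := by
  let e := Fintype.equivFin ι
  simpa [submatrix] using (hκ _ (z ∘ e.symm)).submatrix e

theorem symm (hκ : IsPosDefKernel κ) (p q : X) : κ p q = κ q p := by
  simpa using congrFun₂ (hκ 2 ![q, p]).isHermitian 0 1

end IsPosDefKernel

def structuredKernel {X ι : Type*} [Fintype ι] [DecidableEq ι] (k : ι → X → X → ℝ)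
    (p q : X × (ι → ℝ)) : ℝ :=
  p.2 ⬝ᵥ diagonal (fun i => k i p.1 q.1) *ᵥ q.2

section

variable {X ι : Type*} [Fintype ι] [DecidableEq ι]

theorem structuredKernel_eq_sum (k : ι → X → X → ℝ) (p q : X × (ι → ℝ)) :
    structuredKernel k p q = ∑ i, p.2 i * k i p.1 q.1 * q.2 i := by
  simp [structuredKernel, mulVec_diagonal, dotProduct, mul_assoc]

theorem isPosDefKernel_structuredKernel {k : ι → X → X → ℝ} (hk : ∀ i, IsPosDefKernel (k i)) :
    IsPosDefKernel (structuredKernel k) := by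
  intro M z
  have hgram : (Matrix.of fun a b => structuredKernel k (z a) (z b)) =
      ∑ i, diagonal (fun a => (z a).2 i) * (Matrix.of fun a b => k i (z a).1 (z b).1) *
        (diagonal (fun a => (z a).2 i))ᴴ := by
    ext a b
    simp [structuredKernel_eq_sum, Matrix.sum_apply, diagonal_mul, mul_diagonal]
  rw [hgram]
  exact posSemidef_sum _ fun i _ =>
    ((hk i).posSemidef_gram _).mul_mul_conjTranspose_same _

end

namespace Matrix

variable {m n K : Type*} [Fintype m] [Fintype n] [DecidableEq n]
  [Field K] [PartialOrder K] [StarRing K] [StarOrderedRing K]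

theorem PosSemidef.fromBlocks_add₂₂ {A : Matrix m m K} {B : Matrix m n K} {D E : Matrix n n K}
    (h : (fromBlocks A B Bᴴ D).PosSemidef) (hE : E.PosSemidef) :
    (fromBlocks A B Bᴴ (D + E)).PosSemidef := by
  have hE' : (fromBlocks 0 0 0 E : Matrix (m ⊕ n) (m ⊕ n) K).PosSemidef := by
    convert hE.mul_mul_conjTranspose_same (fromRows (0 : Matrix m n K) (1 : Matrix n n K))
    ext (i | i) (j | j) <;> simp [fromRows_mul, conjTranspose_fromRows_eq_fromCols_conjTranspose]
  simpa [fromBlocks_add] using h.add hE'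

theorem PosSemidef.sub_mul_inv_mul_of_fromBlocks {A : Matrix m m K} {B : Matrix m n K}
    {D E : Matrix n n K} (h : (fromBlocks A B Bᴴ D).PosSemidef) (hE : E.PosDef) :
    (A - B * (D + E)⁻¹ * Bᴴ).PosSemidef := by
  have hD : D.PosSemidef := h.submatrix (Sum.inr : n → m ⊕ n)
  have hDE : (D + E).PosDef := .posSemidef_add hD hE
  have := hDE.isUnit.invertible
  exact (PosDef.fromBlocks₂₂ A B hDE).mp (h.fromBlocks_add₂₂ hE.posSemidef)

end Matrix

/-- The Gaussian-process posterior covariance matrix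
`Σ(x*) = Λ(x*, x*) − K̄ (K + σ² I)⁻¹ K̄ᵀ` of eq. (15) of the paper is symmetric positive
semidefinite, where `K_{ab} = y_aᵀ Λ(x_a, x_b) y_b` is the Gram matrix of the structured
kernel, the `b`-th column of `K̄` is `Λ(x*, x_b) y_b`, the base kernels `k i` are
positive-definite kernels, and `σ > 0`. -/
theorem gp_posterior_cov_psd {X : Type*} (m N : ℕ)
    (k : Fin (m + 1) → X → X → ℝ)
    (hk : ∀ (i : Fin (m + 1)) (M : ℕ) (z : Fin M → X),
      (Matrix.of fun a b => k i (z a) (z b)).PosSemidef)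
    (x : Fin N → X) (y : Fin N → (Fin (m + 1) → ℝ)) (xs : X)
    (σ : ℝ) (hσ : 0 < σ)
    (K : Matrix (Fin N) (Fin N) ℝ)
    (hK : K = Matrix.of fun a b =>
      y a ⬝ᵥ (Matrix.diagonal fun i => k i (x a) (x b)) *ᵥ y b)
    (Kbar : Matrix (Fin (m + 1)) (Fin N) ℝ)
    (hKbar : Kbar = Matrix.of fun i b =>
      ((Matrix.diagonal fun j => k j xs (x b)) *ᵥ y b) i) :
    ((Matrix.diagonal fun i => k i xs xs)
      - Kbar * (K + σ ^ 2 • (1 : Matrix (Fin N) (Fin N) ℝ))⁻¹ * Kbarᵀ).PosSemidef := by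
  have hΛ := isPosDefKernel_structuredKernel hk
  let z : Fin (m + 1) ⊕ Fin N → X × (Fin (m + 1) → ℝ) :=
    Sum.elim (fun i => (xs, Pi.single i 1)) (fun b => (x b, y b))
  have hgram : (Matrix.of fun a b => structuredKernel k (z a) (z b)) =
      fromBlocks (diagonal fun i => k i xs xs) Kbar Kbarᴴ K := by
    subst hK hKbar
    ext (i | a) (j | b)
    · obtain rfl | hij := eq_or_ne i j
      · simp [z, structuredKernel]
      · simp [z, structuredKernel, hij, hij.symm]
    · simp [z, structuredKernel]
    · rw [of_apply, hΛ.symm]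
      simp [z, structuredKernel]
    · rfl
  have hE : (σ ^ 2 • (1 : Matrix (Fin N) (Fin N) ℝ)).PosDef := PosDef.one.smul (by positivity)
  rw [← conjTranspose_eq_transpose_of_trivial]
  exact (hgram ▸ hΛ.posSemidef_gram z).sub_mul_inv_mul_of_fromBlocks hE
end

section
/- Let α : [0, ∞) → [0, ∞) be a continuous, strictly increasing function with α(0) = 0 (a class 𝒦 function), let T > 0, and let h : [0, T] → ℝ be a differentiable function such that h(0) ≥ 0 and h'(t) ≥ −α(max(h(t), 0)) for all t ∈ [0, T]. Then h(t) ≥ 0 for all t ∈ [0, T]. -/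
open Set

/-- Scalar comparison fact underlying Corollary 1 of the paper: if `α` is a class 𝒦
function (continuous, strictly increasing on `[0,∞)`, `α(0) = 0`, with nonnegative
values), `h(0) ≥ 0`, and `h'(t) ≥ −α(max(h(t), 0))` on `[0, T]`, then `h(t) ≥ 0` on
`[0, T]` (forward invariance of the zero-superlevel set). -/
theorem cbf_forward_invariance (α : ℝ → ℝ)
    (hcont : ContinuousOn α (Ici (0 : ℝ)))
    (hmono : StrictMonoOn α (Ici (0 : ℝ)))
    (hα0 : α 0 = 0)
    (hαnn : ∀ s : ℝ, 0 ≤ s → 0 ≤ α s)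
    (T : ℝ) (hT : 0 < T) (h g : ℝ → ℝ)
    (hderiv : ∀ t ∈ Icc (0 : ℝ) T, HasDerivWithinAt h (g t) (Icc (0 : ℝ) T) t)
    (h0 : 0 ≤ h 0)
    (hineq : ∀ t ∈ Icc (0 : ℝ) T, -α (max (h t) 0) ≤ g t) :
    ∀ t ∈ Icc (0 : ℝ) T, 0 ≤ h t := by
  have hcontOn : ContinuousOn h (Icc (0 : ℝ) T) := fun t ht =>
    (hderiv t ht).continuousWithinAt
  by_contra hcon
  push_neg at hcon
  obtain ⟨t₁, ht₁mem, ht₁⟩ := hcon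
  obtain ⟨ht₁0, ht₁T⟩ := ht₁mem
  -- the set of times ≤ t₁ where h is nonnegative
  set S : Set ℝ := {t | t ∈ Icc (0 : ℝ) t₁ ∧ 0 ≤ h t} with hS
  have hSne : S.Nonempty := ⟨0, ⟨le_refl 0, ht₁0⟩, h0⟩
  have hSbdd : BddAbove S := ⟨t₁, fun t ht => ht.1.2⟩
  have hSclosed : IsClosed S := by
    have hsub : Icc (0 : ℝ) t₁ ⊆ Icc (0 : ℝ) T := Icc_subset_Icc le_rfl ht₁T
    have hc : ContinuousOn h (Icc (0 : ℝ) t₁) := hcontOn.mono hsub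
    have hclo : IsClosed (Icc (0 : ℝ) t₁ ∩ h ⁻¹' Ici (0 : ℝ)) :=
      hc.preimage_isClosed_of_isClosed isClosed_Icc isClosed_Ici
    have hEq : S = Icc (0 : ℝ) t₁ ∩ h ⁻¹' Ici (0 : ℝ) := by
      ext x; simp [hS, Set.mem_inter_iff, Set.mem_preimage]
    rw [hEq]; exact hclo
  set t₀ := sSup S with ht₀
  have ht₀mem : t₀ ∈ S := hSclosed.csSup_mem hSne hSbdd
  have ht₀0 : 0 ≤ t₀ := ht₀mem.1.1
  have ht₀t₁ : t₀ ≤ t₁ := ht₀mem.1.2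
  have ht₀h : 0 ≤ h t₀ := ht₀mem.2
  have ht₀lt : t₀ < t₁ := lt_of_le_of_ne ht₀t₁ (by
    intro hEq
    rw [hEq] at ht₀h
    linarith)
  -- on (t₀, t₁], h < 0
  have hneg : ∀ t, t₀ < t → t ≤ t₁ → h t < 0 := by
    intro t htgt htle
    by_contra hnn
    push_neg at hnn
    have : t ∈ S := ⟨⟨le_trans ht₀0 htgt.le, htle⟩, hnn⟩
    exact absurd (le_csSup hSbdd this) (not_le.mpr htgt)
  have hderivAt : ∀ t ∈ interior (Icc t₀ t₁), HasDerivAt h (g t) t := by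
    intro t ht
    rw [interior_Icc] at ht
    obtain ⟨hta, htb⟩ := ht
    have htIcc : t ∈ Icc (0 : ℝ) T := ⟨le_trans ht₀0 hta.le, le_trans htb.le ht₁T⟩
    have htint : Icc (0 : ℝ) T ∈ nhds t :=
      Icc_mem_nhds (lt_of_le_of_lt ht₀0 hta) (lt_of_lt_of_le htb ht₁T)
    exact (hderiv t htIcc).hasDerivAt htint
  have hmonoOn : MonotoneOn h (Icc t₀ t₁) := by
    apply monotoneOn_of_deriv_nonneg (convex_Icc t₀ t₁)
    · exact hcontOn.mono (Icc_subset_Icc ht₀0 ht₁T)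
    · intro t ht
      exact (hderivAt t ht).differentiableAt.differentiableWithinAt
    · intro t ht
      rw [(hderivAt t ht).deriv]
      rw [interior_Icc] at ht
      obtain ⟨hta, htb⟩ := ht
      have htIcc : t ∈ Icc (0 : ℝ) T := ⟨le_trans ht₀0 hta.le, le_trans htb.le ht₁T⟩
      have hmax : max (h t) 0 = 0 := max_eq_right (hneg t hta htb.le).le
      have := hineq t htIcc
      rw [hmax, hα0] at this
      linarith
  have := hmonoOn ⟨le_rfl, ht₀t₁⟩ ⟨ht₀t₁, le_rfl⟩ ht₀t₁
  linarith
end
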